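/- Conversely to path projection: let (G[X], G₂) be a separation of G with separator S, let F* be a graph on a subset of S, and suppose for each edge ab ∈ E(F*) there is a fixed a–b path P_{ab} in G whose internal vertices lie outside X, such that the paths {P_{ab}}_{ab ∈ E(F*)} are pairwise internally vertex-disjoint and each is internally disjoint from X. If Q₁,…,Q_k are pairwise internally vertex-disjoint paths in G[X] + E(F*), then replacing in each Qᵢ every used edge ab of F* by the path P_{ab} yields pairwise internally vertex-disjoint paths Q₁^{(Y)},…,Q_k^{(Y)} in G with the same endpoints. -/

import Mathlib

open SimpleGraph

/-- The internal vertices of a walk (support minus the two endpoints). -/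
def Internal {V : Type*} {G : SimpleGraph V} {u v : V} (p : G.Walk u v) : List V :=
  p.support.tail.dropLast

/-- Two walks are internally vertex-disjoint if no vertex of one appears as an
internal vertex of the other. -/
def IntDisjoint {V : Type*} {G : SimpleGraph V} {a b c d : V}
    (p : G.Walk a b) (q : G.Walk c d) : Prop :=
  (∀ x ∈ p.support, x ∉ Internal q) ∧ (∀ x ∈ q.support, x ∉ Internal p)

/-- A topological minor model of `H` in `G`. -/
structure TopMinorModel {α β : Type*} (H : SimpleGraph α) (G : SimpleGraph β) where
  η : α → β
  inj : Function.Injective η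
  path : ∀ ⦃u v : α⦄, H.Adj u v → G.Walk (η u) (η v)
  isPath : ∀ ⦃u v : α⦄ (h : H.Adj u v), (path h).IsPath
  avoid : ∀ ⦃u v : α⦄ (h : H.Adj u v), ∀ x ∈ Internal (path h), ∀ w : α, x ≠ η w
  disj : ∀ ⦃u v u' v' : α⦄ (h : H.Adj u v) (h' : H.Adj u' v'),
    s(u, v) ≠ s(u', v') → IntDisjoint (path h) (path h')

/-- A separation of a graph `G`, given by the vertex sets of the two sides. -/
structure Separation {V : Type*} (G : SimpleGraph V) where
  A : Set V
  B : Set V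
  cover : A ∪ B = Set.univ
  noEdge : ∀ a ∈ A \ B, ∀ b ∈ B \ A, ¬ G.Adj a b


/-- The graph on the side X of a separation augmented with the edges of F. -/
def addEdges {V : Type*} (G : SimpleGraph V) (X : Set V) (F : SimpleGraph V) :
    SimpleGraph V where
  Adj u v := (G.Adj u v ∧ u ∈ X ∧ v ∈ X) ∨ F.Adj u v
  symm := by
    constructor
    intro u v h
    rcases h with ⟨h, hu, hv⟩ | h
    · exact Or.inl ⟨h.symm, hv, hu⟩
    · exact Or.inr h.symm
  loopless := by
    constructor
    intro u h
    rcases h with ⟨h, _, _⟩ | h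
    · exact G.ne_of_adj h rfl
    · exact F.ne_of_adj h rfl
/-!
Every vertex of the expansion of a path `Q` of `G[X] + E(F)` either lies on `Q`, hence in `X`, or
is an internal vertex of the realizing path `P ab` of an `F`-edge `ab` used by `Q`, hence outside
`X`. Two expanded paths therefore can only meet in vertices of the first kind, where the
internal disjointness of the original paths applies, or in vertices of the second kind, where
the internal disjointness of the `P ab` applies, since no `F`-edge is used by two of the paths.
The same dichotomy shows that each expansion is again a path.
-/

section Internal

variable {V : Type*} {G : SimpleGraph V} {u v x : V}

theorem support_eq_cons_internal_concat {p : G.Walk u v} (hp : ¬p.Nil) :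
    p.support = u :: (Internal p ++ [v]) := by
  rw [Internal, ← p.support_tail_of_not_nil hp, Walk.dropLast_support_concat,
    Walk.cons_support_tail hp]

theorem mem_support_of_mem_internal {p : G.Walk u v} (hx : x ∈ Internal p) : x ∈ p.support :=
  List.tail_subset _ (List.dropLast_subset _ hx)

theorem eq_or_eq_or_mem_internal_of_mem_support {p : G.Walk u v} (hx : x ∈ p.support) :
    x = u ∨ x = v ∨ x ∈ Internal p := by
  by_cases hp : p.Nil
  · rw [Walk.nil_iff_support_eq.mp hp, List.mem_singleton] at hx
    exact .inl hx
  · rw [support_eq_cons_internal_concat hp] at hx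
    simp only [List.mem_cons, List.mem_append] at hx
    tauto

theorem mem_internal_of_mem_support_of_ne {p : G.Walk u v} (hx : x ∈ p.support) (hu : x ≠ u)
    (hv : x ≠ v) : x ∈ Internal p :=
  ((eq_or_eq_or_mem_internal_of_mem_support hx).resolve_left hu).resolve_left hv

theorem SimpleGraph.Walk.IsPath.mem_internal_iff {p : G.Walk u v} (hp : p.IsPath) :
    x ∈ Internal p ↔ x ∈ p.support ∧ x ≠ u ∧ x ≠ v := by
  refine ⟨fun hx => ⟨mem_support_of_mem_internal hx, ?_⟩, fun ⟨hx, hu, hv⟩ => ?_⟩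
  · have hnil : ¬p.Nil := fun h => by simp [Internal, Walk.nil_iff_support_eq.mp h] at hx
    have hnd := hp.support_nodup
    rw [support_eq_cons_internal_concat hnil, List.nodup_cons, List.nodup_append] at hnd
    refine ⟨?_, ?_⟩ <;> rintro rfl
    · exact hnd.1 (List.mem_append_left _ hx)
    · exact hnd.2.2.2 x hx x (List.mem_singleton_self x) rfl
  · exact mem_internal_of_mem_support_of_ne hx hu hv

theorem SimpleGraph.Walk.IsPath.append {w : V} {p : G.Walk u w} {q : G.Walk w v} (hp : p.IsPath)
    (hq : q.IsPath) (hpq : ∀ x ∈ p.support, x ∈ q.support → x = w) :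
    (p.append q).IsPath := by
  have hq' := hq.support_nodup
  rw [← q.cons_tail_support, List.nodup_cons] at hq'
  rw [Walk.isPath_def, Walk.support_append]
  refine hp.support_nodup.append hq'.2 fun x hxp hxq => ?_
  obtain rfl := hpq x hxp (List.mem_of_mem_tail hxq)
  exact hq'.1 hxq

end Internal

section Expand

variable {V : Type*} {G : SimpleGraph V} {X : Set V} {F : SimpleGraph V}

theorem mem_of_mem_support_addEdges (hF : F.support ⊆ X) {u v : V}
    (q : (addEdges G X F).Walk u v) (hu : u ∈ X) : ∀ x ∈ q.support, x ∈ X := by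
  induction q with
  | nil => simpa using hu
  | cons h _ ih =>
    have hc := h.elim (fun hG => hG.2.2) (fun hF' => hF hF'.mem_support_right)
    simpa [hu] using ih hc

structure IsShortcutRealization (X : Set V) (P : ∀ ⦃a b : V⦄, F.Adj a b → G.Walk a b) :
    Prop where
  support_subset : F.support ⊆ X
  isPath : ∀ ⦃a b : V⦄ (h : F.Adj a b), (P h).IsPath
  internal_not_mem : ∀ ⦃a b : V⦄ (h : F.Adj a b), ∀ x ∈ Internal (P h), x ∉ X
  intDisjoint : ∀ ⦃a b a' b' : V⦄ (h : F.Adj a b) (h' : F.Adj a' b'),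
    s(a, b) ≠ s(a', b') → IntDisjoint (P h) (P h')

open Classical in
noncomputable def expand (P : ∀ ⦃a b : V⦄, F.Adj a b → G.Walk a b) :
    ∀ {u v : V}, (addEdges G X F).Walk u v → G.Walk u v
  | _, _, .nil => .nil
  | _, _, .cons h q =>
    if hF : F.Adj _ _ then (P hF).append (expand P q)
    else .cons (h.resolve_right hF).1 (expand P q)

variable (P : ∀ ⦃a b : V⦄, F.Adj a b → G.Walk a b)

theorem mem_support_expand {u v x : V} (q : (addEdges G X F).Walk u v)
    (hx : x ∈ (expand P q).support) :
    x ∈ q.support ∨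
      ∃ a b, ∃ h : F.Adj a b, s(a, b) ∈ q.edges ∧ x ∈ Internal (P h) := by
  induction q with
  | nil => simpa [expand] using hx
  | @cons a c _ h q ih =>
    have lift (hx : x ∈ (expand P q).support) : x ∈ (Walk.cons h q).support ∨
        ∃ a b, ∃ h' : F.Adj a b, s(a, b) ∈ (Walk.cons h q).edges ∧ x ∈ Internal (P h') :=
      (ih hx).imp (List.mem_cons_of_mem a) fun ⟨a', b', h', he, hi⟩ =>
        ⟨a', b', h', List.mem_cons_of_mem _ he, hi⟩
    unfold expand at hx
    split_ifs at hx with hF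
    · rcases (Walk.mem_support_append_iff _ _).mp hx with hx | hx
      · rcases eq_or_eq_or_mem_internal_of_mem_support hx with rfl | rfl | hi
        · exact .inl (Walk.start_mem_support _)
        · exact .inl (List.mem_cons_of_mem a q.start_mem_support)
        · exact .inr ⟨a, c, hF, List.mem_cons_self, hi⟩
      · exact lift hx
    · rcases List.mem_cons.mp hx with rfl | hx
      · exact .inl (Walk.start_mem_support _)
      · exact lift hx

theorem isPath_expand (hP : IsShortcutRealization X P) {u v : V}
    (q : (addEdges G X F).Walk u v) (hq : q.IsPath) (hu : u ∈ X) : (expand P q).IsPath := by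
  induction q with
  | nil => exact Walk.IsPath.nil
  | @cons a c _ h q ih =>
    rw [Walk.cons_isPath_iff] at hq
    have hc : c ∈ X := mem_of_mem_support_addEdges hP.support_subset (.cons h q) hu c
      (List.mem_cons_of_mem _ q.start_mem_support)
    have ha : a ∉ (expand P q).support := fun ha =>
      (mem_support_expand P q ha).elim hq.2
        fun ⟨_, _, h', _, hi⟩ => hP.internal_not_mem h' a hi hu
    unfold expand
    split_ifs with hFac
    · refine (hP.isPath hFac).append (ih hq.1 hc) fun x hxP hxq => ?_
      rcases eq_or_eq_or_mem_internal_of_mem_support hxP with rfl | rfl | hi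
      · exact absurd hxq ha
      · rfl
      · exfalso
        rcases mem_support_expand P q hxq with hxq | ⟨a', b', h', he, hi'⟩
        · exact hP.internal_not_mem hFac x hi
            (mem_of_mem_support_addEdges hP.support_subset q hc x hxq)
        · have hne : s(a, c) ≠ s(a', b') := fun heq =>
            hq.2 (q.fst_mem_support_of_mem_edges (heq ▸ he))
          exact (hP.intDisjoint hFac h' hne).1 x hxP hi'
    · exact (ih hq.1 hc).cons ha

theorem not_mem_internal_expand (hP : IsShortcutRealization X P)
    {u v u' v' : V} {q : (addEdges G X F).Walk u v} {q' : (addEdges G X F).Walk u' v'}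
    (hu : u ∈ X) (hu' : u' ∈ X) (hq' : (expand P q').IsPath)
    (hqq' : ∀ x ∈ q.support, x ∉ Internal q')
    (hshared : ∀ ⦃a b : V⦄, F.Adj a b → s(a, b) ∈ q.edges → s(a, b) ∉ q'.edges) :
    ∀ x ∈ (expand P q).support, x ∉ Internal (expand P q') := by
  intro x hx hxint
  obtain ⟨hxq', hxu', hxv'⟩ := hq'.mem_internal_iff.mp hxint
  rcases mem_support_expand P q hx with hxq | ⟨a, b, h, he, hxi⟩
  · have hxX := mem_of_mem_support_addEdges hP.support_subset q hu x hxq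
    rcases mem_support_expand P q' hxq' with hxq' | ⟨_, _, h', -, hxi'⟩
    · exact hqq' x hxq (mem_internal_of_mem_support_of_ne hxq' hxu' hxv')
    · exact hP.internal_not_mem h' x hxi' hxX
  · rcases mem_support_expand P q' hxq' with hxq' | ⟨a', b', h', he', hxi'⟩
    · exact hP.internal_not_mem h x hxi
        (mem_of_mem_support_addEdges hP.support_subset q' hu' x hxq')
    · by_cases heq : s(a, b) = s(a', b')
      · exact hshared h he (heq ▸ he')
      · exact (hP.intDisjoint h h' heq).1 x (mem_support_of_mem_internal hxi) hxi'

theorem intDisjoint_expand (hP : IsShortcutRealization X P)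
    {u v u' v' : V} {q : (addEdges G X F).Walk u v} {q' : (addEdges G X F).Walk u' v'}
    (hq : q.IsPath) (hq' : q'.IsPath) (hu : u ∈ X) (hu' : u' ∈ X) (hqq' : IntDisjoint q q')
    (hshared : ∀ ⦃a b : V⦄, F.Adj a b → s(a, b) ∈ q.edges → s(a, b) ∉ q'.edges) :
    IntDisjoint (expand P q) (expand P q') :=
  ⟨not_mem_internal_expand P hP hu hu' (isPath_expand P hP q' hq' hu') hqq'.1 hshared,
    not_mem_internal_expand P hP hu' hu (isPath_expand P hP q hq hu) hqq'.2
      fun _ _ h he' he => hshared h he he'⟩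

end Expand

/-- expanding internally disjoint paths of G[X] + E(F*) back into G by
replacing each F*-edge by its realizing path. -/
theorem stmt18 {V : Type*} (G : SimpleGraph V) (X : Set V) (S : Separation G)
    (hA : S.A = X)
    (Fstar : SimpleGraph V)
    (hFroot : ∀ a b, Fstar.Adj a b → a ∈ S.A ∩ S.B ∧ b ∈ S.A ∩ S.B)
    (P : ∀ ⦃a b : V⦄, Fstar.Adj a b → G.Walk a b)
    (hPpath : ∀ ⦃a b : V⦄ (h : Fstar.Adj a b), (P h).IsPath)
    (hPint : ∀ ⦃a b : V⦄ (h : Fstar.Adj a b), ∀ x ∈ Internal (P h), x ∉ X)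
    (hPdisj : ∀ ⦃a b a' b' : V⦄ (h : Fstar.Adj a b) (h' : Fstar.Adj a' b'),
      s(a, b) ≠ s(a', b') → IntDisjoint (P h) (P h'))
    (k : ℕ) (s t : Fin k → V) (hsX : ∀ i, s i ∈ X ∧ t i ∈ X)
    (Q : ∀ i, (addEdges G X Fstar).Walk (s i) (t i))
    (hQ : ∀ i, (Q i).IsPath)
    (hQdisj : ∀ i j, i ≠ j → IntDisjoint (Q i) (Q j))
    (hUse : ∀ a b, Fstar.Adj a b → ∀ i j,
      s(a, b) ∈ (Q i).edges → s(a, b) ∈ (Q j).edges → i = j) :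
    ∃ R : ∀ i, G.Walk (s i) (t i), (∀ i, (R i).IsPath) ∧
      ∀ i j, i ≠ j → IntDisjoint (R i) (R j) := by
  have hP : IsShortcutRealization X P :=
    ⟨fun a ⟨b, h⟩ => hA ▸ (hFroot a b h).1.1, hPpath, hPint, hPdisj⟩
  refine ⟨fun i => expand P (Q i), fun i => isPath_expand P hP (Q i) (hQ i) (hsX i).1,
    fun i j hij => ?_⟩
  exact intDisjoint_expand P hP (hQ i) (hQ j) (hsX i).1 (hsX j).1 (hQdisj i j hij)
    fun a b h hi hj => hij (hUse a b h i j hi hj)
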